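/- arXiv:2204.00165 — 2 statements merged into one kernel-verified Lean document; each statement's English description precedes it below -/
import Mathlib

section
/- The generating function N(t,u,z) = Σ_{n≥0} N_n(t,u) z^n for Dyck paths counted by high and low peaks satisfies N(t,u,z) = 1 + z(N(t,t,z) - 1 + u)·N(t,u,z). -/
attribute [local instance] Classical.propDecidable

/-- The word 1^k 2^k ... n^k. -/
def baseWord (n k : ℕ) : List ℕ := (List.range n).flatMap (fun i => List.replicate k (i+1))

/-- All permutations of the multiset with k copies of each of 1,...,n. -/
noncomputable def multiPerms (n k : ℕ) : Finset (List ℕ) := (baseWord n k).permutations.toFinset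

/-- Number of descents of a word. -/
def des (w : List ℕ) : ℕ := ((w.zip w.tail).filter (fun p => decide (p.2 < p.1))).length
/-- Number of plateaus of a word. -/
def plat (w : List ℕ) : ℕ := ((w.zip w.tail).filter (fun p => decide (p.2 = p.1))).length
/-- Number of weak descents of a word. -/
def wdes (w : List ℕ) : ℕ := ((w.zip w.tail).filter (fun p => decide (p.2 ≤ p.1))).length

/-- Avoidance of the patterns 1221 and 2112: there are no positions i < j < l < m with
w_i = w_m, w_j = w_l and w_i ≠ w_j. -/
def avoids (w : List ℕ) : Prop := ∀ i j l m, i < j → j < l → l < m → m < w.length →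
  w.getD i 0 = w.getD m 0 → w.getD j 0 = w.getD l 0 → w.getD i 0 = w.getD j 0

/-- Nonnesting permutations of the multiset {1,1,...,n,n}. -/
noncomputable def nonnest (n : ℕ) : Finset (List ℕ) := (multiPerms n 2).filter avoids

/-- Dyck words: E = true, N = false, n steps of each kind, every prefix staying
weakly below the diagonal. -/
noncomputable def dyckWords (n : ℕ) : Finset (List Bool) :=
  ((List.replicate n true ++ List.replicate n false).permutations.toFinset).filter
    (fun s => ∀ k, (s.take k).count false ≤ (s.take k).count true)

/-- A peak is a consecutive EN pair. -/
def isPeak (s : List Bool) (i : ℕ) : Prop :=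
  i + 1 < s.length ∧ s.getD i false = true ∧ s.getD (i+1) true = false

/-- A low peak is a peak touching the diagonal. -/
def isLowPeak (s : List Bool) (i : ℕ) : Prop :=
  isPeak s i ∧ (s.take (i+1)).count true = (s.take (i+1)).count false + 1

/-- Number of peaks. -/
noncomputable def pea (s : List Bool) : ℕ :=
  ((Finset.range s.length).filter (fun i => isPeak s i)).card
/-- Number of low peaks. -/
noncomputable def lpea (s : List Bool) : ℕ :=
  ((Finset.range s.length).filter (fun i => isLowPeak s i)).card
/-- Number of high peaks. -/
noncomputable def hpea (s : List Bool) : ℕ :=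
  ((Finset.range s.length).filter (fun i => isPeak s i ∧ ¬ isLowPeak s i)).card

/-- Bivariate Narayana polynomial N_n(t,u), t = X 0, u = X 1. -/
noncomputable def Npoly (n : ℕ) : MvPolynomial (Fin 2) ℚ :=
  ∑ D ∈ dyckWords n, (MvPolynomial.X 0) ^ hpea D * (MvPolynomial.X 1) ^ lpea D

/-- The generating function N(t,u,z) = ∑_n N_n(t,u) z^n. -/
noncomputable def Nser : PowerSeries (MvPolynomial (Fin 2) ℚ) :=
  PowerSeries.mk (fun n => Npoly n)

/-- The generating function N(t,t,z) counting Dyck paths by all peaks. -/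
noncomputable def Nttser : PowerSeries (MvPolynomial (Fin 2) ℚ) :=
  PowerSeries.mk (fun n => ∑ D ∈ dyckWords n, (MvPolynomial.X 0) ^ pea D)


section FirstReturn

abbrev IsDyck (s : List Bool) (n : ℕ) : Prop :=
  s.count true = n ∧ s.count false = n ∧
    ∀ k, (s.take k).count false ≤ (s.take k).count true

lemma count_tf (s : List Bool) : s.count true + s.count false = s.length := by
  induction s with
  | nil => simp
  | cons x t ih => cases x <;> simp [List.count_cons] <;> omega

lemma mem_dyck {n : ℕ} {s : List Bool} : s ∈ dyckWords n ↔ IsDyck s n := by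
  simp only [dyckWords, Finset.mem_filter, List.mem_toFinset, List.mem_permutations, IsDyck]
  constructor
  · rintro ⟨hp, hpre⟩
    have ht := List.perm_iff_count.mp hp true
    have hf := List.perm_iff_count.mp hp false
    simp [List.count_append, List.count_replicate] at ht hf
    exact ⟨ht, hf, hpre⟩
  · rintro ⟨ht, hf, hpre⟩
    refine ⟨List.perm_iff_count.mpr fun a => ?_, hpre⟩
    cases a <;> simp [List.count_append, List.count_replicate, ht, hf]

lemma dyck_zero : dyckWords 0 = {[]} := by
  ext s
  simp only [mem_dyck, Finset.mem_singleton, IsDyck]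
  constructor
  · rintro ⟨ht, hf, -⟩
    have := count_tf s
    rw [← List.length_eq_zero_iff]
    omega
  · rintro rfl; simp

lemma take_succ_getD {α : Type*} (l : List α) (k : ℕ) (hk : k < l.length) (d : α) :
    l.take (k+1) = l.take k ++ [l.getD k d] := by
  rw [List.take_succ]
  congr 1
  simp [List.getD_eq_getElem?_getD, List.getElem?_eq_getElem hk]

lemma isDyck_head {s : List Bool} {n : ℕ} (h : IsDyck s n) (hs : s ≠ []) (d : Bool) :
    s.getD 0 d = true := by
  obtain ⟨x, t, rfl⟩ : ∃ x t, s = x :: t := by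
    cases s with
    | nil => exact absurd rfl hs
    | cons x t => exact ⟨_, _, rfl⟩
  have := h.2.2 1
  cases x
  · simp at this
  · rfl

lemma isDyck_last {s : List Bool} {n : ℕ} (h : IsDyck s n) (hs : s ≠ []) (d : Bool) :
    s.getD (s.length - 1) d = false := by
  have hl : 0 < s.length := List.length_pos_iff.mpr hs
  have hdec : s.take s.length = s.take (s.length - 1) ++ [s.getD (s.length - 1) d] := by
    rw [show s.length = (s.length - 1) + 1 by omega]
    exact take_succ_getD _ _ (by omega) _
  rw [List.take_length] at hdec
  have hpre := h.2.2 (s.length - 1)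
  cases hv : s.getD (s.length - 1) d
  · rfl
  · exfalso
    rw [hv] at hdec
    have h1 : s.count true = (s.take (s.length-1)).count true + 1 := by
      conv_lhs => rw [hdec]
      simp
    have h2 : s.count false = (s.take (s.length-1)).count false := by
      conv_lhs => rw [hdec]
      simp
    have hn : 0 < n := by
      rcases Nat.eq_zero_or_pos n with h0 | h0
      · exfalso; have := count_tf s; omega
      · exact h0
    omega

lemma glue_length (a b : List Bool) :
    (true :: (a ++ false :: b)).length = a.length + b.length + 2 := by
  simp; omega

lemma glue_take_low (a b : List Bool) {k : ℕ} (hk : k ≤ a.length) :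
    (true :: (a ++ false :: b)).take (k+1) = true :: a.take k := by
  rw [List.take_succ_cons, List.take_append, Nat.sub_eq_zero_of_le hk]
  simp

lemma glue_take_high (a b : List Bool) (k : ℕ) :
    (true :: (a ++ false :: b)).take (a.length + 2 + k) = true :: (a ++ false :: b.take k) := by
  rw [show a.length + 2 + k = (a.length + 1 + k) + 1 by omega, List.take_succ_cons,
    List.take_append,
    show a.length + 1 + k - a.length = k + 1 by omega,
    List.take_of_length_le (by omega : a.length ≤ a.length + 1 + k)]
  simp

lemma glue_getD_mid {a : List Bool} (b : List Bool) {r : ℕ} (hr : r < a.length) (d : Bool) :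
    (true :: (a ++ false :: b)).getD (r+1) d = a.getD r d := by
  rw [List.getD_cons_succ]
  exact List.getD_append _ _ _ _ hr

lemma glue_getD_sep (a b : List Bool) (d : Bool) :
    (true :: (a ++ false :: b)).getD (a.length+1) d = false := by
  rw [List.getD_cons_succ, List.getD_append_right _ _ _ _ le_rfl]
  simp

lemma glue_getD_high (a b : List Bool) (s : ℕ) (d : Bool) :
    (true :: (a ++ false :: b)).getD (a.length+2+s) d = b.getD s d := by
  rw [show a.length + 2 + s = (a.length + 1 + s) + 1 by omega, List.getD_cons_succ,
    List.getD_append_right _ _ _ _ (by omega),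
    show a.length + 1 + s - a.length = s + 1 by omega, List.getD_cons_succ]

lemma glue_isDyck {a b : List Bool} {i j : ℕ} (ha : IsDyck a i) (hb : IsDyck b j) :
    IsDyck (true :: (a ++ false :: b)) (i + j + 1) := by
  refine ⟨?_, ?_, ?_⟩
  · simp [List.count_append, List.count_cons, ha.1, hb.1]
  · simp [List.count_append, List.count_cons, ha.2.1, hb.2.1]; omega
  · intro k
    match k with
    | 0 => simp
    | (k+1) =>
      rcases le_or_gt k a.length with hk | hk
      · rw [glue_take_low a b hk]
        have := ha.2.2 k
        simp [List.count_cons]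
        omega
      · have hk2 : k + 1 = a.length + 2 + (k - a.length - 1) := by omega
        rw [hk2, glue_take_high]
        have := hb.2.2 (k - a.length - 1)
        simp [List.count_append, List.count_cons, ha.1, ha.2.1]
        omega

lemma isPeak_glue_zero {a b : List Bool} {i : ℕ} (ha : IsDyck a i) :
    isPeak (true :: (a ++ false :: b)) 0 ↔ a = [] := by
  constructor
  · rintro ⟨h1, h2, h3⟩
    by_contra hne
    have hh := isDyck_head ha hne true
    rw [glue_getD_mid b (List.length_pos_iff.mpr hne) true, hh] at h3
    simp at h3
  · rintro rfl
    exact ⟨by simp, rfl, rfl⟩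

lemma isLowPeak_glue_zero {a b : List Bool} {i : ℕ} (ha : IsDyck a i) :
    isLowPeak (true :: (a ++ false :: b)) 0 ↔ a = [] := by
  rw [isLowPeak, isPeak_glue_zero ha]
  constructor
  · rintro ⟨h, -⟩; exact h
  · rintro rfl
    refine ⟨rfl, ?_⟩
    simp

lemma isPeak_glue_mid {a b : List Bool} {i : ℕ} (ha : IsDyck a i) {r : ℕ} (hr : r < a.length) :
    isPeak (true :: (a ++ false :: b)) (r+1) ↔ isPeak a r := by
  constructor
  · rintro ⟨h1, h2, h3⟩
    rw [glue_getD_mid b hr] at h2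
    by_cases hr1 : r + 1 < a.length
    · rw [glue_getD_mid b hr1] at h3
      exact ⟨hr1, h2, h3⟩
    · exfalso
      have hne : a ≠ [] := by intro h; subst h; simp at hr
      have hlast := isDyck_last ha hne false
      rw [show r = a.length - 1 by omega, hlast] at h2
      simp at h2
  · rintro ⟨h1, h2, h3⟩
    exact ⟨by rw [glue_length]; omega, by rw [glue_getD_mid b hr]; exact h2,
      by rw [glue_getD_mid b h1]; exact h3⟩

lemma not_isPeak_glue_sep {a b : List Bool} :
    ¬ isPeak (true :: (a ++ false :: b)) (a.length + 1) := by
  rintro ⟨h1, h2, h3⟩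
  rw [glue_getD_sep] at h2
  simp at h2

lemma not_isLowPeak_glue_mid {a b : List Bool} {i : ℕ} (ha : IsDyck a i) {r : ℕ}
    (hr : r < a.length) : ¬ isLowPeak (true :: (a ++ false :: b)) (r+1) := by
  rintro ⟨⟨h1, h2, h3⟩, h4⟩
  rw [glue_getD_mid b hr] at h2
  rw [glue_take_low a b (by omega), take_succ_getD a r hr false, h2] at h4
  simp [List.count_append, List.count_cons] at h4
  have := ha.2.2 r
  omega

lemma isPeak_glue_high {a b : List Bool} (s : ℕ) :
    isPeak (true :: (a ++ false :: b)) (a.length+2+s) ↔ isPeak b s := by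
  have e1 : a.length + 2 + s + 1 = a.length + 2 + (s+1) := by omega
  constructor
  · rintro ⟨h1, h2, h3⟩
    rw [glue_getD_high] at h2
    rw [e1, glue_getD_high] at h3
    rw [glue_length] at h1
    exact ⟨by omega, h2, h3⟩
  · rintro ⟨h1, h2, h3⟩
    refine ⟨by rw [glue_length]; omega, by rw [glue_getD_high]; exact h2,
      by rw [e1, glue_getD_high]; exact h3⟩

lemma isLowPeak_glue_high {a b : List Bool} {i : ℕ} (ha : IsDyck a i) (s : ℕ) :
    isLowPeak (true :: (a ++ false :: b)) (a.length+2+s) ↔ isLowPeak b s := by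
  rw [isLowPeak, isLowPeak, isPeak_glue_high,
    show a.length + 2 + s + 1 = a.length + 2 + (s+1) by omega, glue_take_high]
  have h1 : (true :: (a ++ false :: b.take (s+1))).count true = i + 1 + (b.take (s+1)).count true := by
    simp [List.count_append, List.count_cons, ha.1]; omega
  have h2 : (true :: (a ++ false :: b.take (s+1))).count false = i + 1 + (b.take (s+1)).count false := by
    simp [List.count_append, List.count_cons, ha.2.1]; omega
  rw [h1, h2]
  constructor
  · rintro ⟨hp, hc⟩; exact ⟨hp, by omega⟩
  · rintro ⟨hp, hc⟩; exact ⟨hp, by omega⟩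

lemma dyck_decomp {n : ℕ} {D : List Bool} (hD : IsDyck D (n+1)) :
    ∃ i j a b, i + j = n ∧ IsDyck a i ∧ IsDyck b j ∧ D = true :: (a ++ false :: b) := by
  have hlen : D.length = 2*(n+1) := by
    have := count_tf D
    omega
  obtain ⟨x, tl, rfl⟩ : ∃ x tl, D = x :: tl := by
    cases D with
    | nil => simp at hlen
    | cons x tl => exact ⟨_, _, rfl⟩
  have hx : x = true := by
    have h1 := hD.2.2 1
    cases x
    · simp at h1
    · rfl
  subst hx
  have hPex : ∃ m, 0 < m ∧
      (((true :: tl).take m).count false = ((true :: tl).take m).count true) := by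
    refine ⟨(true :: tl).length, by simp, ?_⟩
    rw [List.take_length]
    rw [hD.1, hD.2.1]
  set m := Nat.find hPex with hmdef
  obtain ⟨hm0, hmbal⟩ := Nat.find_spec hPex
  rw [← hmdef] at hm0 hmbal
  have hmle : m ≤ (true :: tl).length := Nat.find_le ⟨by simp, by
    rw [List.take_length]; rw [hD.1, hD.2.1]⟩
  have hm2 : 2 ≤ m := by
    by_contra h
    have hm1 : m = 1 := by omega
    rw [hm1] at hmbal
    simp at hmbal
  set k := m - 1 with hkdef
  have hk1 : k < (true :: tl).length := by omega
  have hnotbal : ((true :: tl).take k).count false ≠ ((true :: tl).take k).count true :=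
    fun hEq => Nat.find_min hPex (show k < m by omega) ⟨by omega, hEq⟩
  have hlt : ((true :: tl).take k).count false < ((true :: tl).take k).count true :=
    lt_of_le_of_ne (hD.2.2 k) hnotbal
  have htake : (true :: tl).take (k+1) = (true :: tl).take k ++ [(true :: tl).getD k false] :=
    take_succ_getD _ _ hk1 _
  have hval : (true :: tl).getD k false = false := by
    cases hv : (true :: tl).getD k false
    · rfl
    · exfalso
      rw [hv] at htake
      rw [show m = k + 1 by omega, htake] at hmbal
      simp [List.count_append] at hmbal
      omega
  -- define a and b
  have hk0 : 1 ≤ k := by omega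
  have hktl : k - 1 < tl.length := by simp at hk1; omega
  set a := tl.take (k-1) with hadef
  set b := tl.drop k with hbdef
  have hvala : tl.getD (k-1) false = false := by
    rw [show k = (k-1) + 1 by omega, List.getD_cons_succ] at hval
    exact hval
  have htlk : tl.take k = a ++ [false] := by
    rw [show k = (k-1) + 1 by omega, take_succ_getD tl (k-1) hktl false, hvala]
  have hDeq : true :: tl = true :: (a ++ false :: b) := by
    conv_lhs => rw [← List.take_append_drop k tl]
    rw [htlk, ← hbdef]
    simp
  have htakek : (true :: tl).take k = true :: a := by
    rw [show k = (k-1)+1 by omega, List.take_succ_cons, ← hadef]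
  -- counts of a
  have habal : a.count true = a.count false := by
    have : (true :: tl).take m = (true :: tl).take k ++ [false] := by
      rw [show m = k+1 by omega, htake, hval]
    rw [this, htakek] at hmbal
    simp [List.count_append] at hmbal
    omega
  set i := a.count true with hidef
  have hia : IsDyck a i := by
    refine ⟨rfl, habal.symm, fun k' => ?_⟩
    rcases le_or_gt (a.length) k' with hk' | hk'
    · rw [List.take_of_length_le hk']
      omega
    · have hlenA : a.length = k - 1 := by
        rw [hadef]
        simp
        omega
      have htk' : a.take k' = tl.take k' := by
        rw [hadef, List.take_take]
        congr 1
        omega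
      have hD' := hD.2.2 (k'+1)
      have hnb : ((true :: tl).take (k'+1)).count false ≠ ((true :: tl).take (k'+1)).count true :=
        fun hEq => Nat.find_min hPex (show k'+1 < m by omega) ⟨by omega, hEq⟩
      rw [List.take_succ_cons] at hD' hnb
      rw [htk']
      simp [List.count_cons] at hD' hnb ⊢
      omega
  -- counts of b
  have hcount : (true :: tl).count true = 1 + a.count true + b.count true ∧
      (true :: tl).count false = a.count false + 1 + b.count false := by
    rw [hDeq]
    constructor <;> simp [List.count_append, List.count_cons] <;> omega
  have hbbal : b.count true = b.count false := by
    have h1 := hD.1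
    have h2 := hD.2.1
    omega
  have hib : IsDyck b (b.count true) := by
    refine ⟨rfl, hbbal.symm, fun k' => ?_⟩
    have hD' := hD.2.2 (a.length + 2 + k')
    rw [hDeq] at hD'
    rw [glue_take_high] at hD'
    simp [List.count_append, List.count_cons] at hD'
    omega
  refine ⟨i, b.count true, a, b, ?_, hia, hib, hDeq⟩
  have h1 := hD.1
  omega

lemma glue_len_not_lt {a a' b b' : List Bool} {i i' : ℕ} (ha : IsDyck a i) (ha' : IsDyck a' i')
    (h : true :: (a ++ false :: b) = true :: (a' ++ false :: b'))
    (hlt : a.length < a'.length) : False := by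
  have h1 : (true :: (a ++ false :: b)).take (a.length + 2) =
      (true :: (a' ++ false :: b')).take (a.length + 2) := by rw [h]
  rw [show a.length + 2 = a.length + 2 + 0 from rfl, glue_take_high] at h1
  rw [show a.length + 2 + 0 = (a.length + 1) + 1 from rfl,
    glue_take_low a' b' (by omega)] at h1
  simp only [List.take_zero, List.cons.injEq, true_and] at h1
  have hc := congrArg (List.count false) h1
  have hc' := congrArg (List.count true) h1
  simp [List.count_append, List.count_cons, ha.1, ha.2.1] at hc hc'
  have hp := ha'.2.2 (a.length + 1)
  omega

lemma glue_inj {a a' b b' : List Bool} {i i' : ℕ} (ha : IsDyck a i) (ha' : IsDyck a' i')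
    (h : true :: (a ++ false :: b) = true :: (a' ++ false :: b')) :
    a = a' ∧ b = b' := by
  have hlen : a.length = a'.length := by
    rcases lt_trichotomy a.length a'.length with hl | hl | hl
    · exact absurd (glue_len_not_lt ha ha' h hl) not_false
    · exact hl
    · exact absurd (glue_len_not_lt ha' ha h.symm hl) not_false
  simp only [List.cons.injEq, true_and] at h
  obtain ⟨h1, h2⟩ := List.append_inj h hlen
  exact ⟨h1, by simpa using h2⟩

lemma sum_range_add' {M : Type*} [AddCommMonoid M] (f : ℕ → M) (m n : ℕ) :
    ∑ r ∈ Finset.range (m+n), f r =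
      (∑ r ∈ Finset.range m, f r) + ∑ r ∈ Finset.range n, f (m+r) := by
  induction n with
  | zero => simp
  | succ n ih =>
    rw [← Nat.add_assoc, Finset.sum_range_succ, ih, Finset.sum_range_succ, add_assoc]

lemma pea_split (s : List Bool) : pea s = hpea s + lpea s := by
  simp only [pea, hpea, lpea, Finset.card_filter]
  rw [← Finset.sum_add_distrib]
  refine Finset.sum_congr rfl fun r _ => ?_
  by_cases hL : isLowPeak s r
  · simp [hL, hL.1]
  · by_cases hP : isPeak s r <;> simp [hL, hP]

section
variable {a b : List Bool} {i j : ℕ}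

lemma count_stat_glue (_ : IsDyck a i) (_ : IsDyck b j)
    (P : List Bool → ℕ → Prop) (Q : ℕ → Prop)
    (h0 : P (true :: (a ++ false :: b)) 0 ↔ a = [])
    (hmid : ∀ r < a.length, ((if P (true :: (a ++ false :: b)) (r+1) then 1 else 0 : ℕ) =
      if Q r then 1 else 0))
    (hsep : ¬ P (true :: (a ++ false :: b)) (a.length + 1))
    (hhigh : ∀ s, P (true :: (a ++ false :: b)) (a.length+2+s) ↔ P b s) :
    ((Finset.range (true :: (a ++ false :: b)).length).filter
        (fun r => P (true :: (a ++ false :: b)) r)).card =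
      (if a = [] then 1 else 0) +
        ((Finset.range a.length).filter (fun r => Q r)).card +
        ((Finset.range b.length).filter (fun r => P b r)).card := by
  simp only [Finset.card_filter]
  rw [glue_length, show a.length + b.length + 2 = (a.length + 2) + b.length by omega,
    sum_range_add']
  have h2 : ∑ r ∈ Finset.range b.length,
      (if P (true :: (a ++ false :: b)) (a.length + 2 + r) then 1 else 0 : ℕ) =
      ∑ r ∈ Finset.range b.length, if P b r then 1 else 0 :=
    Finset.sum_congr rfl fun r _ => by rw [if_congr (hhigh r) rfl rfl]
  rw [h2]
  have h3 : ∑ r ∈ Finset.range (a.length + 2),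
      (if P (true :: (a ++ false :: b)) r then 1 else 0 : ℕ) =
      (if a = [] then 1 else 0) + ∑ r ∈ Finset.range a.length, if Q r then 1 else 0 := by
    rw [Finset.sum_range_succ' (fun r => if P (true :: (a ++ false :: b)) r then (1:ℕ) else 0)
      (a.length + 1)]
    rw [Finset.sum_range_succ]
    rw [if_neg hsep, if_congr h0 rfl rfl]
    rw [Finset.sum_congr rfl fun r hr => hmid r (Finset.mem_range.mp hr)]
    omega
  rw [h3]

lemma pea_glue (ha : IsDyck a i) (hb : IsDyck b j) :
    pea (true :: (a ++ false :: b)) = (if a = [] then 1 else 0) + pea a + pea b := by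
  rw [pea, pea, pea]
  exact count_stat_glue ha hb isPeak (fun r => isPeak a r) (isPeak_glue_zero ha)
    (fun r hr => by rw [if_congr (isPeak_glue_mid ha hr) rfl rfl])
    not_isPeak_glue_sep isPeak_glue_high

lemma lpea_glue (ha : IsDyck a i) (hb : IsDyck b j) :
    lpea (true :: (a ++ false :: b)) = (if a = [] then 1 else 0) + lpea b := by
  rw [lpea, lpea]
  have h := count_stat_glue ha hb isLowPeak (fun _ => False) (isLowPeak_glue_zero ha)
    (fun r hr => by rw [if_neg (not_isLowPeak_glue_mid ha hr), if_neg not_false])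
    (fun hc => not_isPeak_glue_sep hc.1) (isLowPeak_glue_high ha)
  rw [h]
  simp

lemma hpea_glue (ha : IsDyck a i) (hb : IsDyck b j) :
    hpea (true :: (a ++ false :: b)) = pea a + hpea b := by
  have h1 := pea_split (true :: (a ++ false :: b))
  have h2 := pea_split b
  have h3 := pea_glue ha hb
  have h4 := lpea_glue ha hb
  omega

end

open MvPolynomial

lemma pea_nil : pea [] = 0 := by simp [pea]
lemma hpea_nil : hpea [] = 0 := by simp [hpea]
lemma lpea_nil : lpea [] = 0 := by simp [lpea]

lemma Npoly_zero : Npoly 0 = 1 := by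
  rw [Npoly, dyck_zero, Finset.sum_singleton, hpea_nil, lpea_nil]
  simp

lemma Ntt_zero : ∑ D ∈ dyckWords 0, (X 0 : MvPolynomial (Fin 2) ℚ) ^ pea D = 1 := by
  rw [dyck_zero, Finset.sum_singleton, pea_nil, pow_zero]

lemma Npoly_succ (n : ℕ) :
    Npoly (n+1) = ∑ p ∈ Finset.HasAntidiagonal.antidiagonal n,
      (if p.1 = 0 then (X 1 : MvPolynomial (Fin 2) ℚ)
        else ∑ c ∈ dyckWords p.1, X 0 ^ pea c) * Npoly p.2 := by
  have key : ∑ x ∈ (Finset.HasAntidiagonal.antidiagonal n).sigma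
      (fun p => dyckWords p.1 ×ˢ dyckWords p.2),
      ((X 0 : MvPolynomial (Fin 2) ℚ) ^ (pea x.2.1 + hpea x.2.2) *
        X 1 ^ ((if x.2.1 = [] then 1 else 0) + lpea x.2.2)) =
      ∑ D ∈ dyckWords (n+1), X 0 ^ hpea D * X 1 ^ lpea D := by
    refine Finset.sum_bij (fun x _ => true :: (x.2.1 ++ false :: x.2.2)) ?_ ?_ ?_ ?_
    · rintro ⟨⟨i, j⟩, a, b⟩ hx
      simp only [Finset.mem_sigma, Finset.HasAntidiagonal.mem_antidiagonal, Finset.mem_product, mem_dyck] at hx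
      rw [mem_dyck]
      have h := glue_isDyck hx.2.1 hx.2.2
      rw [show i + j + 1 = n + 1 by have := hx.1; omega] at h
      exact h
    · rintro ⟨⟨i, j⟩, a, b⟩ hx ⟨⟨i', j'⟩, a', b'⟩ hx' heq
      simp only [Finset.mem_sigma, Finset.HasAntidiagonal.mem_antidiagonal, Finset.mem_product, mem_dyck] at hx hx'
      obtain ⟨hab, hbb⟩ := glue_inj hx.2.1 hx'.2.1 heq
      subst hab
      subst hbb
      have hi : i = i' := by rw [← hx.2.1.1, ← hx'.2.1.1]
      have hj : j = j' := by
        have h1 := hx.1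
        have h2 := hx'.1
        omega
      subst hi
      subst hj
      rfl
    · intro D hD
      rw [mem_dyck] at hD
      obtain ⟨i, j, a, b, hij, ha, hb, hDeq⟩ := dyck_decomp hD
      refine ⟨⟨(i, j), (a, b)⟩, ?_, hDeq.symm⟩
      simp only [Finset.mem_sigma, Finset.HasAntidiagonal.mem_antidiagonal, Finset.mem_product, mem_dyck]
      exact ⟨hij, ha, hb⟩
    · rintro ⟨⟨i, j⟩, a, b⟩ hx
      simp only [Finset.mem_sigma, Finset.HasAntidiagonal.mem_antidiagonal, Finset.mem_product, mem_dyck] at hx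
      rw [hpea_glue hx.2.1 hx.2.2, lpea_glue hx.2.1 hx.2.2]
  rw [Npoly, ← key, Finset.sum_sigma]
  refine Finset.sum_congr rfl fun p hp => ?_
  rw [Finset.sum_product]
  obtain ⟨i, j⟩ := p
  by_cases hi : i = 0
  · subst hi
    simp only [if_pos rfl]
    rw [dyck_zero, Finset.sum_singleton, pea_nil, Npoly, Finset.mul_sum]
    refine Finset.sum_congr rfl fun b hb => ?_
    simp [pow_add, mul_comm, mul_assoc, mul_left_comm]
  · simp only [if_neg hi]
    rw [Finset.sum_mul]
    refine Finset.sum_congr rfl fun a ha => ?_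
    have hane : a ≠ [] := by
      rw [mem_dyck] at ha
      intro hn
      subst hn
      have := ha.1
      simp at this
      omega
    rw [Npoly, Finset.mul_sum]
    refine Finset.sum_congr rfl fun b hb => ?_
    rw [if_neg hane]
    ring


/-- First-return decomposition: N(t,u,z) = 1 + z (N(t,t,z) - 1 + u) N(t,u,z). -/
theorem narayana_gf_equation :
    Nser = 1 + PowerSeries.X * (Nttser - 1 + PowerSeries.C (MvPolynomial.X 1)) * Nser := by
  refine PowerSeries.ext fun n => ?_
  rw [show Nser = PowerSeries.mk (fun n => Npoly n) from rfl, PowerSeries.coeff_mk]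
  cases n with
  | zero =>
    rw [map_add, PowerSeries.coeff_zero_eq_constantCoeff, map_mul, map_mul]
    simp [Npoly_zero]
  | succ n =>
    rw [map_add, mul_assoc, PowerSeries.coeff_succ_X_mul, PowerSeries.coeff_one,
      if_neg (Nat.succ_ne_zero n), zero_add, PowerSeries.coeff_mul, Npoly_succ]
    refine Finset.sum_congr rfl fun p hp => ?_
    congr 1
    congr 1
    · rw [map_add, map_sub, PowerSeries.coeff_one, PowerSeries.coeff_C,
        show Nttser = PowerSeries.mk (fun n => ∑ D ∈ dyckWords n, (X 0 : MvPolynomial (Fin 2) ℚ) ^ pea D) from rfl,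
        PowerSeries.coeff_mk]
      by_cases h : p.1 = 0
      · rw [if_pos h, if_pos h, if_pos h, h, Ntt_zero]
        ring
      · rw [if_neg h, if_neg h, if_neg h]
        ring
    · rw [PowerSeries.coeff_mk]

end FirstReturn
end

section
/- The bivariate Narayana polynomial satisfies N_n(t,u) = t^n · N_n(1/t, u/t); equivalently, the number of Dyck paths in D_n with h high peaks and ℓ low peaks equals the number with n - h - ℓ high peaks and ℓ low peaks. -/
attribute [local instance] Classical.propDecidable

def peag : List Bool → ℕ
  | [] => 0
  | x :: t => ((if x = true ∧ t.head? = some false then 1 else 0) : ℕ) + peag t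

def lpg : ℤ → List Bool → ℕ
  | _, [] => 0
  | d, x :: t => ((if x = true ∧ t.head? = some false ∧ d = 0 then 1 else 0) : ℕ)
      + lpg (d + if x then 1 else -1) t

lemma isPeak_cons_succ (x : Bool) (t : List Bool) (i : ℕ) :
    isPeak (x :: t) (i+1) ↔ isPeak t i := by
  simp [isPeak, Nat.succ_lt_succ_iff]

lemma isPeak_cons_zero (x : Bool) (t : List Bool) :
    isPeak (x :: t) 0 ↔ x = true ∧ t.head? = some false := by
  constructor
  · rintro ⟨h1, h2, h3⟩
    cases t with
    | nil => simp at h1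
    | cons y r => simp_all [isPeak]
  · rintro ⟨h1, h2⟩
    cases t with
    | nil => simp at h2
    | cons y r =>
      simp only [List.head?_cons, Option.some.injEq] at h2
      exact ⟨by simp, by simpa using h1, by simpa using h2⟩

lemma pea_cons (x : Bool) (t : List Bool) :
    pea (x :: t) = (if x = true ∧ t.head? = some false then 1 else 0) + pea t := by
  unfold pea
  rw [Finset.card_filter, Finset.card_filter, List.length_cons, Finset.sum_range_succ']
  have h1 : ∀ i ∈ Finset.range t.length,
      (if isPeak (x :: t) (i+1) then (1:ℕ) else 0) = if isPeak t i then 1 else 0 :=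
    fun i _ => if_congr (isPeak_cons_succ x t i) rfl rfl
  rw [Finset.sum_congr rfl h1]
  have h0 : (if isPeak (x :: t) 0 then (1:ℕ) else 0)
      = if x = true ∧ t.head? = some false then 1 else 0 :=
    if_congr (isPeak_cons_zero x t) rfl rfl
  rw [h0, Nat.add_comm]

lemma pea_eq_peag (s : List Bool) : pea s = peag s := by
  induction s with
  | nil => simp [pea, peag]
  | cons x t ih => rw [pea_cons, peag, ih]

noncomputable def lcnt (a b : ℕ) (s : List Bool) : ℕ :=
  ((Finset.range s.length).filter
    (fun i => isPeak s i ∧ a + (s.take (i+1)).count true = b + (s.take (i+1)).count false + 1)).card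

lemma lcnt_eq_lpg (s : List Bool) : ∀ a b : ℕ, lcnt a b s = lpg ((a : ℤ) - b) s := by
  induction s with
  | nil => intro a b; simp [lcnt, lpg]
  | cons x t ih =>
    intro a b
    unfold lcnt
    rw [Finset.card_filter, List.length_cons, Finset.sum_range_succ']
    have h1 : ∀ i ∈ Finset.range t.length,
        (if isPeak (x :: t) (i+1) ∧
            a + ((x :: t).take (i+1+1)).count true = b + ((x :: t).take (i+1+1)).count false + 1
          then (1:ℕ) else 0)
        = if isPeak t i ∧
            (a + if x = true then 1 else 0) + (t.take (i+1)).count true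
              = (b + if x = true then 0 else 1) + (t.take (i+1)).count false + 1
          then 1 else 0 := by
      intro i _
      apply if_congr _ rfl rfl
      have ht : ((x :: t).take (i+1+1)) = x :: t.take (i+1) := rfl
      rw [ht, isPeak_cons_succ]
      simp only [List.count_cons]
      constructor <;> rintro ⟨h', e⟩ <;> refine ⟨h', ?_⟩ <;> cases x <;> simp_all <;> omega
    rw [Finset.sum_congr rfl h1]
    have h2 : ∑ i ∈ Finset.range t.length,
        (if isPeak t i ∧
            (a + if x = true then 1 else 0) + (t.take (i+1)).count true
              = (b + if x = true then 0 else 1) + (t.take (i+1)).count false + 1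
          then (1:ℕ) else 0)
        = lcnt (a + if x = true then 1 else 0) (b + if x = true then 0 else 1) t := by
      rw [lcnt, Finset.card_filter]
    rw [h2, ih]
    have hoff : ((a + if x = true then 1 else 0 : ℕ) : ℤ) - ((b + if x = true then 0 else 1 : ℕ) : ℤ) =
        ((a:ℤ) - b) + if x then 1 else -1 := by cases x <;> push_cast <;> simp <;> ring
    rw [hoff, lpg]
    have h0 : (if isPeak (x :: t) 0 ∧
        a + ((x :: t).take (0+1)).count true = b + ((x :: t).take (0+1)).count false + 1
        then (1:ℕ) else 0)
        = if x = true ∧ t.head? = some false ∧ ((a:ℤ) - b) = 0 then 1 else 0 := by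
      apply if_congr _ rfl rfl
      rw [isPeak_cons_zero]
      have ht : ((x :: t).take (0+1)) = [x] := rfl
      rw [ht]
      cases x
      · simp
      · simp only [List.count_cons, List.count_nil]
        norm_num
        intro _
        omega
    rw [h0]
    omega

lemma lpea_eq_lpg (s : List Bool) : lpea s = lpg 0 s := by
  have h := lcnt_eq_lpg s 0 0
  simp only [Nat.cast_zero, sub_zero] at h
  rw [← h]
  unfold lpea lcnt
  congr 1
  apply Finset.filter_congr
  intro i _
  unfold isLowPeak
  constructor
  · rintro ⟨h1, h2⟩; exact ⟨h1, by omega⟩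
  · rintro ⟨h1, h2⟩; exact ⟨h1, by omega⟩

lemma hpea_add_lpea (s : List Bool) : hpea s + lpea s = pea s := by
  classical
  unfold hpea lpea pea
  have h1 : (Finset.range s.length).filter (fun i => isLowPeak s i)
      = ((Finset.range s.length).filter (fun i => isPeak s i)).filter (fun i => isLowPeak s i) := by
    rw [Finset.filter_filter]
    apply Finset.filter_congr
    intro i _
    exact ⟨fun h => ⟨h.1, h⟩, fun h => h.2⟩
  have h2 : (Finset.range s.length).filter (fun i => isPeak s i ∧ ¬ isLowPeak s i)
      = ((Finset.range s.length).filter (fun i => isPeak s i)).filter (fun i => ¬ isLowPeak s i) := by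
    rw [Finset.filter_filter]
  rw [h1, h2, Nat.add_comm]
  exact Finset.card_filter_add_card_filter_not _

inductive IsDyck_s14 : List Bool → Prop
  | nil : IsDyck_s14 []
  | cons {A B : List Bool} : IsDyck_s14 A → IsDyck_s14 B → IsDyck_s14 (true :: A ++ false :: B)

def spl : List Bool → ℕ → List Bool × List Bool
  | [], _ => ([], [])
  | true :: t, d => (true :: (spl t (d+1)).1, (spl t (d+1)).2)
  | false :: t, 0 => ([], t)
  | false :: t, d+1 => (false :: (spl t d).1, (spl t d).2)

lemma spl_length : ∀ (t : List Bool) (d : ℕ),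
    (spl t d).1.length ≤ t.length ∧ (spl t d).2.length ≤ t.length := by
  intro t
  induction t with
  | nil => intro d; simp [spl]
  | cons x r ih =>
    intro d
    cases x with
    | true => have := ih (d+1); simp [spl]; omega
    | false =>
      cases d with
      | zero => simp [spl]
      | succ e => have := ih e; simp [spl]; omega

lemma spl_spec {A : List Bool} (hA : IsDyck_s14 A) : ∀ (r : List Bool),
    (∀ d, spl (A ++ false :: r) (d+1) = (A ++ false :: (spl r d).1, (spl r d).2)) ∧
    spl (A ++ false :: r) 0 = (A, r) := by
  induction hA with
  | nil => intro r; constructor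
           · intro d; simp [spl]
           · simp [spl]
  | @cons A1 B1 h1 h2 ih1 ih2 =>
    intro r
    have e1 : (true :: A1 ++ false :: B1) ++ false :: r
        = true :: (A1 ++ false :: (B1 ++ false :: r)) := by simp
    constructor
    · intro d
      rw [e1, spl, (ih1 (B1 ++ false :: r)).1 (d+1), ((ih2 r).1 d)]
      simp
    · rw [e1, spl, (ih1 (B1 ++ false :: r)).1 0, (ih2 r).2]
      simp

lemma spl_spec0 {A : List Bool} (hA : IsDyck_s14 A) (r : List Bool) :
    spl (A ++ false :: r) 0 = (A, r) := (spl_spec hA r).2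

def phi : List Bool → List Bool
  | [] => []
  | false :: _ => []
  | true :: t =>
    if (spl t 0).1 = [] then true :: (phi (spl t 0).2 ++ [false])
    else if (spl t 0).2 = [] then true :: false :: phi (spl t 0).1
    else true :: (phi (spl t 0).1 ++ false :: phi (spl t 0).2)
termination_by s => s.length
decreasing_by
  all_goals (simp only [List.length_cons]; have := spl_length t 0; omega)

def psi : List Bool → List Bool
  | [] => []
  | false :: _ => []
  | true :: t =>
    if (spl t 0).1 = [] then true :: false :: psi (spl t 0).2
    else true :: (phi (spl t 0).1 ++ false :: psi (spl t 0).2)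
termination_by s => s.length
decreasing_by
  all_goals (simp only [List.length_cons]; have := spl_length t 0; omega)

lemma phi_arch {A B : List Bool} (hA : IsDyck_s14 A) :
    phi (true :: A ++ false :: B)
      = if A = [] then true :: (phi B ++ [false])
        else if B = [] then true :: false :: phi A
        else true :: (phi A ++ false :: phi B) := by
  have e1 : (true :: A ++ false :: B) = true :: (A ++ false :: B) := by simp
  rw [e1, phi, spl_spec0 hA B]

lemma psi_arch {A B : List Bool} (hA : IsDyck_s14 A) :
    psi (true :: A ++ false :: B)
      = if A = [] then true :: false :: psi B
        else true :: (phi A ++ false :: psi B) := by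
  have e1 : (true :: A ++ false :: B) = true :: (A ++ false :: B) := by simp
  rw [e1, psi, spl_spec0 hA B]

def bal (s : List Bool) : ℤ := (s.count true : ℤ) - s.count false

lemma bal_cons (x : Bool) (t : List Bool) :
    bal (x :: t) = (if x then 1 else -1) + bal t := by
  unfold bal
  cases x <;> simp [List.count_cons] <;> push_cast <;> ring

lemma IsDyck_s14.count_eq {s : List Bool} (h : IsDyck_s14 s) : s.count true = s.count false := by
  induction h with
  | nil => simp
  | cons h1 h2 ih1 ih2 => simp [List.count_cons, List.count_append, ih1, ih2]; omega

lemma IsDyck_s14.bal_eq {s : List Bool} (h : IsDyck_s14 s) : bal s = 0 := by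
  unfold bal; rw [h.count_eq]; ring

lemma length_eq_counts (s : List Bool) : s.length = s.count true + s.count false := by
  induction s with
  | nil => simp
  | cons x t ih =>
    rw [List.length_cons, ih]
    cases x <;> simp [List.count_cons] <;> omega

lemma IsDyck_s14.length_eq {s : List Bool} (h : IsDyck_s14 s) :
    s.length = 2 * s.count true := by
  have h1 := length_eq_counts s
  have h2 := h.count_eq
  omega

lemma getLast?_cons_ne (a : Bool) (t : List Bool) (ht : t ≠ []) :
    (a :: t).getLast? = t.getLast? := by
  cases t with
  | nil => simp at ht
  | cons b l => simp

lemma IsDyck_s14.getLast {s : List Bool} (h : IsDyck_s14 s) (hs : s ≠ []) :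
    s.getLast? = some false := by
  induction h with
  | nil => simp at hs
  | @cons A B h1 h2 ih1 ih2 =>
    rcases eq_or_ne B [] with hB | hB
    · subst hB
      rw [List.getLast?_concat]
    · have e : true :: A ++ false :: B = (true :: A ++ [false]) ++ B := by simp
      rw [e, List.getLast?_append, ih2 hB]
      simp

lemma IsDyck_s14.head {s : List Bool} (h : IsDyck_s14 s) (hs : s ≠ []) :
    s.head? = some true := by
  cases h with
  | nil => simp at hs
  | cons h1 h2 => simp

lemma peag_append (x y : List Bool) (h : x = [] ∨ x.getLast? = some false) :
    peag (x ++ y) = peag x + peag y := by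
  induction x with
  | nil => simp [peag]
  | cons a t ih =>
    rcases h with h | h
    · simp at h
    · rcases eq_or_ne t [] with ht | ht
      · subst ht
        simp only [List.getLast?_singleton, Option.some.injEq] at h
        subst h
        simp [peag]
      · rw [List.cons_append, peag, peag,
          ih (Or.inr (by rwa [getLast?_cons_ne a t ht] at h)),
          List.head?_append_of_ne_nil t ht]
        omega

lemma lpg_append (x : List Bool) (h : x = [] ∨ x.getLast? = some false) :
    ∀ (d : ℤ) (y : List Bool), lpg d (x ++ y) = lpg d x + lpg (d + bal x) y := by
  induction x with
  | nil => intro d y; simp [lpg, bal]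
  | cons a t ih =>
    intro d y
    rcases h with h | h
    · simp at h
    · rcases eq_or_ne t [] with ht | ht
      · subst ht
        simp only [List.getLast?_singleton, Option.some.injEq] at h
        subst h
        simp [lpg, bal]
      · rw [List.cons_append, lpg, lpg,
          ih (Or.inr (by rwa [getLast?_cons_ne a t ht] at h)) _ y,
          List.head?_append_of_ne_nil t ht, bal_cons]
        ring_nf

lemma lpg_pos {A : List Bool} (hA : IsDyck_s14 A) : ∀ d : ℤ, 1 ≤ d → lpg d A = 0 := by
  induction hA with
  | nil => intro d _; simp [lpg]
  | @cons A1 B1 h1 h2 ih1 ih2 =>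
    intro d hd
    have hlast : A1 = [] ∨ A1.getLast? = some false :=
      (eq_or_ne A1 []).imp id (fun hne => h1.getLast hne)
    rw [List.cons_append, lpg, lpg_append A1 hlast, h1.bal_eq, lpg]
    have hd0 : d ≠ 0 := by omega
    have eA := ih1 (d+1) (by omega)
    have eB := ih2 d hd
    norm_num [hd0]
    exact ⟨eA, eB⟩

lemma peag_arch {A B : List Bool} (hA : IsDyck_s14 A) :
    peag (true :: A ++ false :: B) = (if A = [] then 1 else 0) + (peag A + peag B) := by
  have hlast : A = [] ∨ A.getLast? = some false :=
    (eq_or_ne A []).imp id (fun hne => hA.getLast hne)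
  rw [List.cons_append, peag, peag_append A (false :: B) hlast, peag]
  rcases eq_or_ne A [] with h | h
  · subst h; simp
  · rw [List.head?_append_of_ne_nil A h, hA.head h]
    simp [h]

lemma lpg_arch {A B : List Bool} (hA : IsDyck_s14 A) (hB : IsDyck_s14 B) :
    lpg 0 (true :: A ++ false :: B) = (if A = [] then 1 else 0) + lpg 0 B := by
  have hlast : A = [] ∨ A.getLast? = some false :=
    (eq_or_ne A []).imp id (fun hne => hA.getLast hne)
  rw [List.cons_append, lpg, lpg_append A hlast, hA.bal_eq, lpg]
  norm_num
  rw [lpg_pos hA 1 (by norm_num)]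
  rcases eq_or_ne A [] with h | h
  · subst h; simp
  · simp [h, hA.head h]

lemma phi_nil : phi [] = [] := by simp [phi]
lemma psi_nil : psi [] = [] := by simp [psi]

lemma phi_isDyck {D : List Bool} (h : IsDyck_s14 D) : IsDyck_s14 (phi D) := by
  induction h with
  | nil => rw [phi_nil]; exact IsDyck_s14.nil
  | @cons A B h1 h2 ih1 ih2 =>
    rw [phi_arch h1]
    split_ifs with hA hB
    · have e : true :: (phi B ++ [false]) = true :: phi B ++ false :: [] := by simp
      rw [e]; exact IsDyck_s14.cons ih2 IsDyck_s14.nil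
    · have e : true :: false :: phi A = true :: [] ++ false :: phi A := by simp
      rw [e]; exact IsDyck_s14.cons IsDyck_s14.nil ih1
    · have e : true :: (phi A ++ false :: phi B) = true :: phi A ++ false :: phi B := by simp
      rw [e]; exact IsDyck_s14.cons ih1 ih2

lemma phi_length {D : List Bool} (h : IsDyck_s14 D) : (phi D).length = D.length := by
  induction h with
  | nil => simp [phi]
  | @cons A B h1 h2 ih1 ih2 =>
    rw [phi_arch h1]
    split_ifs with hA hB
    · subst hA; simp_all
    · subst hB; simp_all
    · simp_all

lemma phi_nil_iff {D : List Bool} (h : IsDyck_s14 D) : phi D = [] ↔ D = [] := by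
  cases h with
  | nil => simp [phi]
  | @cons A B h1 h2 =>
    rw [phi_arch h1]
    constructor
    · intro he
      split_ifs at he <;> simp at he
    · intro he; simp at he

lemma phi_phi {D : List Bool} (h : IsDyck_s14 D) : phi (phi D) = D := by
  induction h with
  | nil => simp [phi]
  | @cons A B h1 h2 ih1 ih2 =>
    rw [phi_arch h1]
    split_ifs with hA hB
    · subst hA
      have e : true :: (phi B ++ [false]) = true :: phi B ++ false :: [] := by simp
      rw [e, phi_arch (phi_isDyck h2)]
      rcases eq_or_ne (phi B) [] with hpb | hpb
      · rw [if_pos hpb]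
        have : B = [] := (phi_nil_iff h2).1 hpb
        subst this
        simp [phi]
      · rw [if_neg hpb, if_pos rfl, ih2]
        simp
    · subst hB
      have e : true :: false :: phi A = true :: [] ++ false :: phi A := by simp
      rw [e, phi_arch IsDyck_s14.nil, if_pos rfl, ih1]
      simp
    · have e : true :: (phi A ++ false :: phi B) = true :: phi A ++ false :: phi B := by simp
      rw [e, phi_arch (phi_isDyck h1),
        if_neg (fun he => hA ((phi_nil_iff h1).1 he)),
        if_neg (fun he => hB ((phi_nil_iff h2).1 he)), ih1, ih2]
      simp

lemma peag_phi {D : List Bool} (h : IsDyck_s14 D) (hD : D ≠ []) :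
    2 * (peag (phi D) + peag D) = D.length + 2 := by
  induction h with
  | nil => simp at hD
  | @cons A B h1 h2 ih1 ih2 =>
    rw [phi_arch h1, peag_arch h1]
    split_ifs with hA hB
    · subst hA
      have e : true :: (phi B ++ [false]) = true :: phi B ++ false :: [] := by simp
      rw [e, peag_arch (phi_isDyck h2)]
      rcases eq_or_ne B [] with hB | hB
      · subst hB; simp [phi, peag]
      · rw [if_neg (fun he => hB ((phi_nil_iff h2).1 he))]
        have := ih2 hB
        simp only [peag, List.length_append, List.length_cons, List.length_nil] at *
        omega
    · subst hB
      have e : true :: false :: phi A = true :: [] ++ false :: phi A := by simp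
      rw [e, peag_arch IsDyck_s14.nil, if_pos rfl]
      have := ih1 hA
      simp only [peag, List.length_append, List.length_cons, List.length_nil, if_neg hA] at *
      omega
    · have e : true :: (phi A ++ false :: phi B) = true :: phi A ++ false :: phi B := by simp
      rw [e, peag_arch (phi_isDyck h1)]
      rw [if_neg (fun he => hA ((phi_nil_iff h1).1 he))]
      have e1 := ih1 hA
      have e2 := ih2 hB
      simp only [List.length_append, List.length_cons] at *
      omega

lemma psi_isDyck {D : List Bool} (h : IsDyck_s14 D) : IsDyck_s14 (psi D) := by
  induction h with
  | nil => rw [psi_nil]; exact IsDyck_s14.nil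
  | @cons A B h1 h2 ih1 ih2 =>
    rw [psi_arch h1]
    split_ifs with hA
    · have e : true :: false :: psi B = true :: [] ++ false :: psi B := by simp
      rw [e]; exact IsDyck_s14.cons IsDyck_s14.nil ih2
    · have e : true :: (phi A ++ false :: psi B) = true :: phi A ++ false :: psi B := by simp
      rw [e]; exact IsDyck_s14.cons (phi_isDyck h1) ih2

lemma psi_length {D : List Bool} (h : IsDyck_s14 D) : (psi D).length = D.length := by
  induction h with
  | nil => simp [psi]
  | @cons A B h1 h2 ih1 ih2 =>
    rw [psi_arch h1]
    split_ifs with hA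
    · subst hA; simp_all
    · have := phi_length h1; simp_all

lemma psi_psi {D : List Bool} (h : IsDyck_s14 D) : psi (psi D) = D := by
  induction h with
  | nil => simp [psi]
  | @cons A B h1 h2 ih1 ih2 =>
    rw [psi_arch h1]
    split_ifs with hA
    · subst hA
      have e : true :: false :: psi B = true :: [] ++ false :: psi B := by simp
      rw [e, psi_arch IsDyck_s14.nil, if_pos rfl, ih2]
      simp
    · have e : true :: (phi A ++ false :: psi B) = true :: phi A ++ false :: psi B := by simp
      rw [e, psi_arch (phi_isDyck h1),
        if_neg (fun he => hA ((phi_nil_iff h1).1 he)), phi_phi h1, ih2]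
      simp

lemma lpg_psi {D : List Bool} (h : IsDyck_s14 D) : lpg 0 (psi D) = lpg 0 D := by
  induction h with
  | nil => simp [psi]
  | @cons A B h1 h2 ih1 ih2 =>
    rw [psi_arch h1, lpg_arch h1 h2]
    split_ifs with hA
    · subst hA
      have e : true :: false :: psi B = true :: [] ++ false :: psi B := by simp
      rw [e, lpg_arch IsDyck_s14.nil (psi_isDyck h2), if_pos rfl, ih2]
    · have e : true :: (phi A ++ false :: psi B) = true :: phi A ++ false :: psi B := by simp
      rw [e, lpg_arch (phi_isDyck h1) (psi_isDyck h2),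
        if_neg (fun he => hA ((phi_nil_iff h1).1 he)), ih2]

lemma peag_psi {D : List Bool} (h : IsDyck_s14 D) :
    2 * (peag (psi D) + peag D) = D.length + 2 * lpg 0 D := by
  induction h with
  | nil => simp [psi, peag, lpg]
  | @cons A B h1 h2 ih1 ih2 =>
    rw [psi_arch h1, peag_arch h1, lpg_arch h1 h2]
    split_ifs with hA
    · subst hA
      have e : true :: false :: psi B = true :: [] ++ false :: psi B := by simp
      rw [e, peag_arch IsDyck_s14.nil, if_pos rfl]
      simp only [peag, List.length_append, List.length_cons, List.length_nil] at *
      omega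
    · have e : true :: (phi A ++ false :: psi B) = true :: phi A ++ false :: psi B := by simp
      rw [e, peag_arch (phi_isDyck h1),
        if_neg (fun he => hA ((phi_nil_iff h1).1 he))]
      have e1 := peag_phi h1 hA
      simp only [List.length_append, List.length_cons] at *
      omega

lemma mem_dyckWords_iff {n : ℕ} {s : List Bool} :
    s ∈ dyckWords n ↔ s.count true = n ∧ s.count false = n ∧
      ∀ k, (s.take k).count false ≤ (s.take k).count true := by
  unfold dyckWords
  rw [Finset.mem_filter, List.mem_toFinset, List.mem_permutations, List.perm_iff_count]
  constructor
  · rintro ⟨hc, hp⟩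
    have h1 := hc true
    have h2 := hc false
    simp [List.count_append, List.count_replicate] at h1 h2
    exact ⟨h1, h2, hp⟩
  · rintro ⟨h1, h2, hp⟩
    refine ⟨fun a => ?_, hp⟩
    cases a <;> simp [List.count_append, List.count_replicate, h1, h2]

lemma IsDyck_s14.prefix_le {s : List Bool} (h : IsDyck_s14 s) :
    ∀ k, (s.take k).count false ≤ (s.take k).count true := by
  induction h with
  | nil => intro k; simp
  | @cons A B h1 h2 ih1 ih2 =>
    intro k
    cases k with
    | zero => simp
    | succ m =>
      have e : (true :: A ++ false :: B).take (m+1) = true :: ((A ++ false :: B).take m) := rfl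
      rw [e]
      rw [List.take_append]
      simp only [List.count_cons, List.count_append]
      rcases le_or_gt m A.length with hm | hm
      · have : m - A.length = 0 := by omega
        rw [this]
        have := ih1 m
        simp
        omega
      · have hA : A.take m = A := List.take_of_length_le (by omega)
        obtain ⟨p, hp⟩ : ∃ p, m - A.length = p + 1 := ⟨m - A.length - 1, by omega⟩
        rw [hA, hp]
        have e2 : (false :: B).take (p+1) = false :: B.take p := rfl
        rw [e2]
        have := ih2 p
        have := h1.count_eq
        simp [List.count_cons]
        omega

lemma isDyck_of : ∀ (N : ℕ) (s : List Bool), s.length ≤ N →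
    s.count true = s.count false →
    (∀ k, (s.take k).count false ≤ (s.take k).count true) → IsDyck_s14 s := by
  intro N
  induction N with
  | zero =>
    intro s hlen _ _
    have : s = [] := List.eq_nil_of_length_eq_zero (by omega)
    subst this; exact IsDyck_s14.nil
  | succ N ih =>
    intro s hlen hbal hpre
    rcases s with _ | ⟨x, t⟩
    · exact IsDyck_s14.nil
    · have hx : x = true := by
        have := hpre 1
        cases x
        · simp [List.count_cons] at this
        · rfl
      subst hx
      have htne : t ≠ [] := by
        rintro rfl
        simp at hbal
      classical
      have hex : ∃ k, 1 ≤ k ∧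
          ((true :: t).take k).count true = ((true :: t).take k).count false := by
        refine ⟨(true :: t).length, by simp, ?_⟩
        rw [List.take_of_length_le (le_refl _)]
        exact hbal
      obtain ⟨j, hj1, hjbal, hjle, hmin⟩ : ∃ j, 1 ≤ j ∧
          (((true :: t).take j).count true = ((true :: t).take j).count false) ∧
          j ≤ (true :: t).length ∧
          ∀ m, 1 ≤ m → m < j →
            ¬ (((true :: t).take m).count true = ((true :: t).take m).count false) := by
        refine ⟨Nat.find hex, (Nat.find_spec hex).1, (Nat.find_spec hex).2,
          Nat.find_min' hex ⟨by simp, by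
            rw [List.take_of_length_le (le_refl _)]; exact hbal⟩, ?_⟩
        intro m hm1 hmj hmeq
        exact Nat.find_min hex hmj ⟨hm1, hmeq⟩
      have hmin' : ∀ m, 1 ≤ m → m < j →
          ((true :: t).take m).count false < ((true :: t).take m).count true := by
        intro m h1 h2
        have := hpre m
        have := hmin m h1 h2
        omega
      have hj2 : 2 ≤ j := by
        by_contra hcon
        have : j = 1 := by omega
        subst this
        have e : (true :: t).take 1 = [true] := rfl
        rw [e] at hjbal
        simp at hjbal
      obtain ⟨i, rfl⟩ : ∃ i, j = i + 2 := ⟨j - 2, by omega⟩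
      have hit : i < t.length := by simp at hjle; omega
      have htk1 : t.take (i+1) = t.take i ++ [t[i]'hit] := by
        rw [List.take_succ, List.getElem?_eq_getElem hit]
        rfl
      have htakej : (true :: t).take (i+2) = true :: (t.take i ++ [t[i]'hit]) := by
        rw [show (true :: t).take (i+2) = true :: t.take (i+1) from rfl, htk1]
      have hgetf : t[i]'hit = false := by
        by_contra hc
        have hc' : t[i]'hit = true := by
          cases h' : t[i]'hit
          · exact absurd h' hc
          · rfl
        have hm := hmin' (i+1) (by omega) (by omega)
        have e2 : (true :: t).take (i+1) = true :: t.take i := rfl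
        rw [htakej, hc'] at hjbal
        rw [e2] at hm
        simp [List.count_cons, List.count_append] at hjbal hm
        omega
      set A := t.take i with hA
      set B := t.drop (i+1) with hB
      have hAlen : A.length = i := by rw [hA, List.length_take]; omega
      have htAB : t = A ++ false :: B := by
        rw [hA, hB]
        conv_lhs => rw [← List.take_append_drop i t]
        congr 1
        rw [← hgetf]
        exact List.drop_eq_getElem_cons hit
      have hAbal : A.count true = A.count false := by
        rw [htakej, ← hgetf] at hjbal
        simp [List.count_cons, List.count_append, hgetf] at hjbal
        omega
      have hApre : ∀ k, (A.take k).count false ≤ (A.take k).count true := by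
        intro k
        rcases le_or_gt (A.length) k with hk | hk
        · rw [List.take_of_length_le hk]
          omega
        · have e1 : A.take k = t.take k := by
            rw [hA, List.take_take]
            congr 1
            omega
          have e2 : (true :: t).take (k+1) = true :: t.take k := rfl
          have := hmin' (k+1) (by omega) (by omega)
          rw [e2] at this
          rw [e1]
          simp [List.count_cons] at this
          omega
      have hBbal : B.count true = B.count false := by
        have h1 : (true :: t).count true = 1 + A.count true + B.count true := by
          rw [htAB]; simp [List.count_cons, List.count_append]; omega
        have h2 : (true :: t).count false = A.count false + 1 + B.count false := by
          rw [htAB]; simp [List.count_cons, List.count_append]; omega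
        omega
      have hdropj : (true :: t).drop (i+2) = B := by
        rw [hB]
        rfl
      have hBpre : ∀ k, (B.take k).count false ≤ (B.take k).count true := by
        intro k
        have e1 : (true :: t).take (i+2+k) = (true :: t).take (i+2) ++ B.take k := by
          rw [List.take_add, hdropj]
        have := hpre (i+2+k)
        rw [e1, htakej, ← hgetf] at this
        simp [List.count_cons, List.count_append, hgetf] at this
        omega
      have hAd : IsDyck_s14 A := by
        apply ih A _ hAbal hApre
        have : A.length ≤ t.length := by rw [hA]; simp
        simp at hlen
        omega
      have hBd : IsDyck_s14 B := by
        apply ih B _ hBbal hBpre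
        have : B.length ≤ t.length := by rw [hB]; simp
        simp at hlen
        omega
      rw [htAB]
      exact IsDyck_s14.cons hAd hBd

lemma mem_dyckWords_iff' {n : ℕ} {s : List Bool} :
    s ∈ dyckWords n ↔ IsDyck_s14 s ∧ s.length = 2 * n := by
  rw [mem_dyckWords_iff]
  constructor
  · rintro ⟨h1, h2, h3⟩
    have hd : IsDyck_s14 s := isDyck_of s.length s (le_refl _) (by omega) h3
    exact ⟨hd, by rw [length_eq_counts]; omega⟩
  · rintro ⟨hd, hlen⟩
    have h1 := hd.count_eq
    have h2 := length_eq_counts s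
    exact ⟨by omega, by omega, hd.prefix_le⟩

/-- N_n(t,u) = t^n N_n(1/t, u/t): the number of Dyck paths with h high peaks and
ℓ low peaks equals the number with n - h - ℓ high peaks and ℓ low peaks. -/
theorem narayana_biv_palindromic (n h ℓ : ℕ) (hh : h + ℓ ≤ n) :
    ((dyckWords n).filter (fun D => hpea D = h ∧ lpea D = ℓ)).card
      = ((dyckWords n).filter (fun D => hpea D = n - h - ℓ ∧ lpea D = ℓ)).card := by
  classical
  apply Finset.card_nbij' psi psi
  · intro D hD
    rw [Finset.mem_coe, Finset.mem_filter] at hD ⊢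
    obtain ⟨hmem, hH, hL⟩ := hD
    obtain ⟨hd, hlen⟩ := mem_dyckWords_iff'.1 hmem
    have hsum := hpea_add_lpea D
    have hsum2 := hpea_add_lpea (psi D)
    have hp1 := pea_eq_peag D
    have hp2 := pea_eq_peag (psi D)
    have hl1 := lpea_eq_lpg D
    have hl2 := lpea_eq_lpg (psi D)
    have hinv := peag_psi hd
    have hlp := lpg_psi hd
    refine ⟨mem_dyckWords_iff'.2 ⟨psi_isDyck hd, by rw [psi_length hd]; exact hlen⟩, ?_, ?_⟩
    · rw [← hlp, ← hl2] at hl1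
      omega
    · rw [← hlp, ← hl2] at hl1
      omega
  · intro D hD
    rw [Finset.mem_coe, Finset.mem_filter] at hD ⊢
    obtain ⟨hmem, hH, hL⟩ := hD
    obtain ⟨hd, hlen⟩ := mem_dyckWords_iff'.1 hmem
    have hsum := hpea_add_lpea D
    have hsum2 := hpea_add_lpea (psi D)
    have hp1 := pea_eq_peag D
    have hp2 := pea_eq_peag (psi D)
    have hl1 := lpea_eq_lpg D
    have hl2 := lpea_eq_lpg (psi D)
    have hinv := peag_psi hd
    have hlp := lpg_psi hd
    refine ⟨mem_dyckWords_iff'.2 ⟨psi_isDyck hd, by rw [psi_length hd]; exact hlen⟩, ?_, ?_⟩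
    · rw [← hlp, ← hl2] at hl1
      omega
    · rw [← hlp, ← hl2] at hl1
      omega
  · intro D hD
    rw [Finset.mem_coe, Finset.mem_filter] at hD
    exact psi_psi (mem_dyckWords_iff'.1 hD.1).1
  · intro D hD
    rw [Finset.mem_coe, Finset.mem_filter] at hD
    exact psi_psi (mem_dyckWords_iff'.1 hD.1).1
end
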